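/- arXiv:1604.03774 — 4 statements merged into one kernel-verified Lean document; each statement's English description precedes it below -/
import Mathlib

section
/- Let C_i be a linear [n, k_i, d_i] code over the finite field F_q for 1 ≤ i ≤ s, and let A be an s×m matrix over F_q that is non-singular by columns (NSC). Then the matrix-product code C = [C_1,…,C_s]A has minimum distance d(C) ≥ d* := min{ m·d_1, (m−1)·d_2, …, (m−s+1)·d_s }. -/
open Polynomial Matrix Finset

variable {F : Type*} [Field F]

/-- The minimum (Hamming) distance of a linear code `C ⊆ F^ι`:
the least Hamming weight of a nonzero codeword. -/
noncomputable def minDist {ι : Type*} [Fintype ι] [DecidableEq F]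
    (C : Submodule F (ι → F)) : ℕ :=
  sInf {d | ∃ x ∈ C, x ≠ 0 ∧ hammingNorm x = d}

/-- The Euclidean dual of a linear code. -/
def dualCode {ι : Type*} [Fintype ι] (C : Submodule F (ι → F)) :
    Submodule F (ι → F) where
  carrier := {a | ∀ b ∈ C, ∑ i, a i * b i = 0}
  add_mem' := by
    intro a b ha hb c hc
    simp only [Pi.add_apply, add_mul, Finset.sum_add_distrib,
      ha c hc, hb c hc, add_zero]
  zero_mem' := by
    intro b hb
    simp
  smul_mem' := by
    intro r a ha b hb
    simp only [Pi.smul_apply, smul_eq_mul, mul_assoc, ← Finset.mul_sum,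
      ha b hb, mul_zero]

/-- `C` is a linear complementary dual (LCD) code. -/
def IsLCD {ι : Type*} [Fintype ι] (C : Submodule F (ι → F)) : Prop :=
  C ⊓ dualCode C = ⊥

/-- The Hermitian dual (with respect to `⟨a,b⟩ = ∑ i, a i * (b i)^l`) of a linear code. -/
def hermitianDual (l : ℕ) {ι : Type*} [Fintype ι] (C : Submodule F (ι → F)) :
    Submodule F (ι → F) where
  carrier := {a | ∀ b ∈ C, ∑ i, a i * (b i) ^ l = 0}
  add_mem' := by
    intro a b ha hb c hc
    simp only [Pi.add_apply, add_mul, Finset.sum_add_distrib,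
      ha c hc, hb c hc, add_zero]
  zero_mem' := by
    intro b hb
    simp
  smul_mem' := by
    intro r a ha b hb
    simp only [Pi.smul_apply, smul_eq_mul, mul_assoc, ← Finset.mul_sum,
      ha b hb, mul_zero]

/-- `C` is a Hermitian linear complementary dual code. -/
def IsHermitianLCD (l : ℕ) {ι : Type*} [Fintype ι] (C : Submodule F (ι → F)) : Prop :=
  C ⊓ hermitianDual l C = ⊥

/-- The matrix-product code `[C_1, …, C_s]·A`: all concatenated vectors
`(∑ i a_{i1} c_i, …, ∑ i a_{im} c_i)` with `c_i ∈ C_i`; coordinates are indexed by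
`Fin m × Fin n` (block `j`, position `t` within block). -/
def matrixProductCode {s m n : ℕ} (A : Matrix (Fin s) (Fin m) F)
    (C : Fin s → Submodule F (Fin n → F)) :
    Submodule F (Fin m × Fin n → F) where
  carrier := {x | ∃ c : Fin s → (Fin n → F), (∀ i, c i ∈ C i) ∧
    x = fun p => ∑ i, A i p.1 * c i p.2}
  add_mem' := by
    rintro x y ⟨c, hc, rfl⟩ ⟨d, hd, rfl⟩
    refine ⟨fun i => c i + d i, fun i => (C i).add_mem (hc i) (hd i), ?_⟩
    funext p
    simp [mul_add, Finset.sum_add_distrib]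
  zero_mem' := ⟨0, fun i => (C i).zero_mem, by funext p; simp⟩
  smul_mem' := by
    rintro r x ⟨c, hc, rfl⟩
    refine ⟨fun i => r • c i, fun i => (C i).smul_mem r (hc i), ?_⟩
    funext p
    simp [Finset.mul_sum, mul_left_comm]

/-- A matrix is non-singular by columns (NSC) if, for every `t ≤ s` and every strictly
increasing choice of `t` columns, the `t × t` submatrix formed from the first `t` rows
and those columns is non-singular. -/
def NSC {s m : ℕ} (A : Matrix (Fin s) (Fin m) F) : Prop :=
  ∀ (t : ℕ) (ht : t ≤ s) (j : Fin t → Fin m), StrictMono j →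
    (Matrix.of fun a b : Fin t => A (Fin.castLE ht a) (j b)).det ≠ 0

/-- The cyclic code of length `n` with generator polynomial `g` (a divisor of `Xⁿ - 1`),
viewed in `F^n` via the coefficient identification: a word `c` lies in the code iff the
associated polynomial `∑ cᵢ Xⁱ` (of degree `< n`) is a multiple of `g`. -/
def cyclicCode (n : ℕ) (g : F[X]) : Submodule F (Fin n → F) where
  carrier := {c | g ∣ ∑ i : Fin n, Polynomial.C (c i) * Polynomial.X ^ (i : ℕ)}
  add_mem' := by
    intro a b ha hb
    have h : (∑ i : Fin n, Polynomial.C ((a + b) i) * Polynomial.X ^ (i : ℕ))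
        = (∑ i : Fin n, Polynomial.C (a i) * Polynomial.X ^ (i : ℕ))
          + (∑ i : Fin n, Polynomial.C (b i) * Polynomial.X ^ (i : ℕ)) := by
      simp [add_mul, Finset.sum_add_distrib]
    simp only [Set.mem_setOf_eq] at ha hb ⊢
    rw [h]
    exact dvd_add ha hb
  zero_mem' := by simp
  smul_mem' := by
    intro r a ha
    have h : (∑ i : Fin n, Polynomial.C ((r • a) i) * Polynomial.X ^ (i : ℕ))
        = Polynomial.C r * ∑ i : Fin n, Polynomial.C (a i) * Polynomial.X ^ (i : ℕ) := by
      simp [Finset.mul_sum, mul_assoc]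
    simp only [Set.mem_setOf_eq] at ha ⊢
    rw [h]
    exact ha.mul_left _

/-- The conjugate-reciprocal polynomial
`f^⊥(x) = a₀^{-l} (a_k^l + a_{k-1}^l x + ⋯ + a₀^l x^k)` of `f = a₀ + a₁ x + ⋯ + a_k x^k`. -/
noncomputable def conjReciprocal (l : ℕ) (f : F[X]) : F[X] :=
  Polynomial.C ((f.coeff 0 ^ l)⁻¹) *
    ∑ i ∈ Finset.range (f.natDegree + 1),
      Polynomial.C (f.coeff (f.natDegree - i) ^ l) * Polynomial.X ^ i

/-!
Write a codeword as `x_j = ∑ i, A i j • c i` and let `t` be the last index with `c t ≠ 0`.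
At every position `u` in the support of `c t`, the vector `(c i u)_i` vanishes beyond `t`,
so non-singularity of the `(t+1)`-rowed minors of `A` allows at most `t` of the `m` blocks
of `x` to vanish at `u`. Hence `x` has weight at least `(m - t) · wt(c t) ≥ (m - t) · d t`.
If the product code is zero, the first row of `A` has no zero entry, which forces the first
code to be zero as well, and the bound degenerates to `0 ≤ 0` (`minDist ⊥ = 0` as `sInf ∅`).
-/

theorem Fin.sum_castLE_of_forall_lt_eq_zero {M : Type*} [AddCommMonoid M] {s : ℕ} {t : Fin s}
    {f : Fin s → M} (hf : ∀ i, t < i → f i = 0) :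
    ∑ a : Fin (t + 1), f (Fin.castLE t.isLt a) = ∑ i, f i := by
  have hlast : (Fin.last (t : ℕ)).castLE t.isLt = t := Fin.ext (by simp)
  rw [← sum_subset (subset_univ (Iic t)) fun i _ hi => hf i (by simpa using hi), ← hlast,
    Fin.sum_Iic_castLE, ← Fin.top_eq_last, Iic_top]
  rfl

section MinDist

variable {ι : Type*} [Fintype ι] [DecidableEq F] {C : Submodule F (ι → F)}

theorem minDist_le_hammingNorm {x : ι → F} (hx : x ∈ C) (hx0 : x ≠ 0) :
    minDist C ≤ hammingNorm x :=
  Nat.sInf_le ⟨x, hx, hx0, rfl⟩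

theorem le_minDist {b : ℕ} (hC : C ≠ ⊥) (h : ∀ x ∈ C, x ≠ 0 → b ≤ hammingNorm x) :
    b ≤ minDist C := by
  obtain ⟨x, hx, hx0⟩ := Submodule.exists_mem_ne_zero_of_ne_bot hC
  exact le_csInf ⟨_, x, hx, hx0, rfl⟩ fun _ ⟨y, hy, hy0, hw⟩ => hw ▸ h y hy hy0

theorem minDist_bot : minDist (⊥ : Submodule F (ι → F)) = 0 := by
  simp [minDist]

end MinDist

theorem hammingNorm_prod {α β M : Type*} [Fintype α] [Fintype β] [Zero M] [DecidableEq M]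
    (x : α × β → M) : hammingNorm x = ∑ b, hammingNorm fun a => x (a, b) := by
  rw [hammingNorm, card_filter, Fintype.sum_prod_type, sum_comm]
  exact sum_congr rfl fun b _ => (card_filter _ _).symm

theorem exists_ne_zero_forall_lt_eq_zero {ι M : Type*} [Fintype ι] [LinearOrder ι] [Zero M]
    {c : ι → M} (hc : c ≠ 0) : ∃ t, c t ≠ 0 ∧ ∀ i, t < i → c i = 0 := by
  classical
  have hS : ({i | c i ≠ 0} : Finset ι).Nonempty := by
    simpa [Finset.filter_nonempty_iff, funext_iff] using hc
  obtain ⟨t, ht, hmax⟩ := exists_max_image _ id hS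
  exact ⟨t, (mem_filter.1 ht).2, fun i hti => by_contra fun hi =>
    (hmax i (mem_filter.2 ⟨mem_univ _, hi⟩)).not_gt hti⟩

namespace NSC

variable {s m : ℕ} {A : Matrix (Fin s) (Fin m) F}

theorem card_vecMul_eq_zero_le [DecidableEq F] (hA : NSC A) {v : Fin s → F} {t : Fin s}
    (hvt : v t ≠ 0) (hv : ∀ i, t < i → v i = 0) : #{j | (v ᵥ* A) j = 0} ≤ t := by
  by_contra! h
  obtain ⟨K, hKZ, hK⟩ := exists_subset_card_eq h
  set j := K.orderEmbOfFin hK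
  set w : Fin (t + 1) → F := fun a => v (Fin.castLE t.isLt a)
  have hw : w ᵥ* (Matrix.of fun a b => A (Fin.castLE t.isLt a) (j b)) = 0 := by
    funext b
    have hjb : (v ᵥ* A) (j b) = 0 := (mem_filter.1 (hKZ (K.orderEmbOfFin_mem hK b))).2
    rw [Pi.zero_apply, ← hjb]
    exact Fin.sum_castLE_of_forall_lt_eq_zero (f := fun i => v i * A i (j b))
      fun i hi => by simp [hv i hi]
  have := congr_fun (eq_zero_of_vecMul_eq_zero (hA _ t.isLt j j.strictMono) hw) (Fin.last _)
  have hlast : (Fin.last (t : ℕ)).castLE t.isLt = t := Fin.ext (by simp)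
  exact hvt (by simpa [w, hlast] using this)

theorem sub_le_hammingNorm_vecMul [DecidableEq F] (hA : NSC A) {v : Fin s → F} {t : Fin s}
    (hvt : v t ≠ 0) (hv : ∀ i, t < i → v i = 0) : m - t ≤ hammingNorm (v ᵥ* A) := by
  have := hA.card_vecMul_eq_zero_le hvt hv
  have hsplit := card_filter_add_card_filter_not (s := univ) fun j => (v ᵥ* A) j = 0
  rw [card_univ, Fintype.card_fin] at hsplit
  rw [hammingNorm]
  simp only [ne_eq] at hsplit ⊢
  omega

theorem apply_zero_ne_zero {A : Matrix (Fin (s + 1)) (Fin m) F} (hA : NSC A) (j : Fin m) :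
    A 0 j ≠ 0 := by
  simpa using hA 1 (by omega) ![j] (Subsingleton.strictMono _)

end NSC

section MatrixProductCode

variable {s m n : ℕ} {A : Matrix (Fin s) (Fin m) F} {C : Fin s → Submodule F (Fin n → F)}

theorem single_mem_matrixProductCode {i : Fin s} {c : Fin n → F} (hc : c ∈ C i) :
    (fun p : Fin m × Fin n => A i p.1 * c p.2) ∈ matrixProductCode A C := by
  classical
  refine ⟨Pi.single i c, fun i' => ?_, ?_⟩
  · rcases eq_or_ne i' i with rfl | hi
    · simpa using hc
    · simp [hi]
  · funext p
    simp [Pi.single_apply, ite_apply]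

theorem NSC.sub_mul_minDist_le_hammingNorm [DecidableEq F] (hA : NSC A) {c : Fin s → Fin n → F}
    (hc : ∀ i, c i ∈ C i) {t : Fin s} (hct : c t ≠ 0) (hlast : ∀ i, t < i → c i = 0) :
    (m - t) * minDist (C t) ≤ hammingNorm fun p : Fin m × Fin n => ∑ i, A i p.1 * c i p.2 := by
  have hcol : ∀ u, (fun j => ∑ i, A i j * c i u) = (fun i => c i u) ᵥ* A := fun u =>
    funext fun j => by simp [Matrix.vecMul, dotProduct, mul_comm]
  calc (m - t) * minDist (C t)
      ≤ (m - t) * hammingNorm (c t) := Nat.mul_le_mul_left _ (minDist_le_hammingNorm (hc t) hct)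
    _ = ∑ _u ∈ {u | c t u ≠ 0}, (m - t) := by simp [hammingNorm, mul_comm]
    _ ≤ ∑ u ∈ {u | c t u ≠ 0}, hammingNorm ((fun i => c i u) ᵥ* A) :=
        sum_le_sum fun u hu => hA.sub_le_hammingNorm_vecMul (mem_filter.1 hu).2
          fun i hi => by simp [hlast i hi]
    _ ≤ ∑ u, hammingNorm ((fun i => c i u) ᵥ* A) := sum_le_sum_of_subset (filter_subset _ _)
    _ = _ := by simp only [hammingNorm_prod, hcol]

theorem NSC.mul_minDist_eq_zero_of_matrixProductCode_eq_bot [DecidableEq F]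
    {A : Matrix (Fin (s + 1)) (Fin m) F} {C : Fin (s + 1) → Submodule F (Fin n → F)}
    (hA : NSC A) (h : matrixProductCode A C = ⊥) : m * minDist (C 0) = 0 := by
  rcases m with _ | m
  · simp
  suffices C 0 = ⊥ by simp [this, minDist_bot]
  refine (Submodule.eq_bot_iff _).2 fun c hc => funext fun u => ?_
  have hx := single_mem_matrixProductCode (A := A) (m := m + 1) hc
  rw [h, Submodule.mem_bot] at hx
  simpa [hA.apply_zero_ne_zero] using congr_fun hx (0, u)

end MatrixProductCode

theorem stmt1_general {F : Type*} [Field F] [DecidableEq F]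
    {s m n : ℕ} (A : Matrix (Fin s) (Fin m) F)
    (hNSC : NSC A)
    (C : Fin s → Submodule F (Fin n → F)) (d : Fin s → ℕ)
    (hd : ∀ i, minDist (C i) = d i) :
    sInf {v | ∃ i : Fin s, v = (m - (i : ℕ)) * d i}
      ≤ minDist (matrixProductCode A C) := by
  obtain rfl : d = fun i => minDist (C i) := funext fun i => (hd i).symm
  by_cases hbot : matrixProductCode A C = ⊥
  · rcases s with _ | s
    · simp
    have h0 := hNSC.mul_minDist_eq_zero_of_matrixProductCode_eq_bot hbot
    exact le_trans (Nat.sInf_le ⟨0, by simpa using h0.symm⟩) (Nat.zero_le _)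
  refine le_minDist hbot ?_
  rintro _ ⟨c, hc, rfl⟩ hx
  obtain ⟨t, hct, hlast⟩ :=
    exists_ne_zero_forall_lt_eq_zero (c := c) fun h => hx (funext fun p => by simp [h])
  exact le_trans (Nat.sInf_le ⟨t, rfl⟩) (hNSC.sub_mul_minDist_le_hammingNorm hc hct hlast)

theorem stmt1 {F : Type*} [Field F] [Fintype F] [DecidableEq F]
    {s m n : ℕ} (hsm : s ≤ m) (A : Matrix (Fin s) (Fin m) F)
    (hNSC : NSC A)
    (C : Fin s → Submodule F (Fin n → F)) (k d : Fin s → ℕ)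
    (hk : ∀ i, Module.finrank F (C i) = k i)
    (hC : ∀ i, C i ≠ ⊥)
    (hd : ∀ i, minDist (C i) = d i) :
    sInf {v | ∃ i : Fin s, v = (m - (i : ℕ)) * d i}
      ≤ minDist (matrixProductCode A C) :=
  stmt1_general A hNSC C d hd
end

section
/- Let F_q have characteristic p, and write n = p^t·l with gcd(l,p) = 1. A cyclic code C of length n over F_q is an LCD code if and only if its generator polynomial g(x) has the form g(x) = f(x)^{p^t}, where f(x) is a monic squarefree self-reciprocal divisor of x^l − 1 over F_q. (Equivalently, writing x^l − 1 = δ f_1⋯f_k h_1 h_1*⋯h_s h_s* with f_i irreducible and associate to their own reciprocals and (h_j, h_j*) pairs of mutually reciprocal irreducibles, g(x) = Π_i f_i^{α_i} Π_j (h_j h_j*)^{β_j} with each α_i ∈ {0, p^t} and each β_j ∈ {0, p^t}.) -/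
open Polynomial Matrix Finset

variable {F : Type*} [Field F]

/-!
Identify a word `c` with `c(x) = ∑ cᵢ xⁱ` and let `g h = xⁿ - 1`. Since `∑ aᵢ bᵢ` is the
coefficient of `x^(n-1)` in `x^(n-1) a(1/x) · b(x)`, a word `a` lies in `C^⊥` iff `h` divides the
reflection of `a(x)`. Reflecting a codeword `g q` gives `g* q*` with `deg q* < deg h`, so `C` is
LCD iff `g*` is coprime to `h`.

In characteristic `p`, `xⁿ - 1 = (xˡ - 1)^(pᵗ)` with `xˡ - 1` squarefree and self-reciprocal. If
`g*` is coprime to `h`, then `g*` divides `g h` and hence `g`, so `g` is self-reciprocal and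
coprime to `h`; as `g h` is a `pᵗ`-th power, so is `g = f^(pᵗ)`, and then `f ∣ xˡ - 1` is
self-reciprocal too. Conversely, `f` and `(xˡ - 1)/f` are coprime because `xˡ - 1` is
squarefree.
-/

namespace Polynomial

section Semiring

variable {R : Type*} [Semiring R]

theorem coeff_zero_ne_zero_of_dvd {f q : R[X]} (h : f ∣ q) (hq : q.coeff 0 ≠ 0) :
    f.coeff 0 ≠ 0 := by
  obtain ⟨r, rfl⟩ := h
  rw [mul_coeff_zero] at hq
  exact left_ne_zero_of_mul hq

theorem natDegree_reverse_of_coeff_zero_ne_zero {f : R[X]} (h0 : f.coeff 0 ≠ 0) :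
    f.reverse.natDegree = f.natDegree := by
  rw [reverse_natDegree, natTrailingDegree_eq_zero.2 (Or.inr h0), Nat.sub_zero]

variable [NoZeroDivisors R]

theorem reverse_pow (f : R[X]) (k : ℕ) : (f ^ k).reverse = f.reverse ^ k := by
  induction k with
  | zero => simp [reverse]
  | succ k ih => rw [pow_succ, pow_succ, reverse_mul_of_domain, ih]

theorem reverse_dvd_reverse {f g : R[X]} (h : f ∣ g) : f.reverse ∣ g.reverse := by
  obtain ⟨c, rfl⟩ := h
  exact ⟨c.reverse, reverse_mul_of_domain f c⟩

end Semiring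

theorem reverse_X_pow_sub_one {R : Type*} [CommRing R] [Nontrivial R] {l : ℕ} :
    (X ^ l - 1 : R[X]).reverse = -(X ^ l - 1) := by
  have hdeg : (X ^ l - 1 : R[X]).natDegree = l := by
    simpa using natDegree_X_pow_sub_C (n := l) (r := (1 : R))
  rw [reverse, hdeg, reflect_sub, reflect_monomial, revAt_le le_rfl, Nat.sub_self, reflect_one]
  ring

theorem reflect_mul_eq_reverse_mul_reflect {R : Type*} [CommSemiring R] {f q : R[X]} {N : ℕ}
    (hf : f.natDegree ≤ N) (hq : q.natDegree ≤ N - f.natDegree) :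
    reflect N (f * q) = f.reverse * reflect (N - f.natDegree) q := by
  conv_lhs => rw [← Nat.add_sub_cancel' hf]
  exact reflect_mul f q le_rfl hq

theorem sum_mul_eq_coeff_reflect_ofFn_mul {R : Type*} [CommSemiring R] [DecidableEq R] {n : ℕ}
    (a b : Fin n → R) :
    ∑ i, a i * b i = (reflect (n - 1) (ofFn n a) * ofFn n b).coeff (n - 1) := by
  rcases n with _ | m
  · simp
  rw [mul_comm, coeff_mul, Finset.Nat.sum_antidiagonal_eq_sum_range_succ
    (fun i j => (ofFn _ b).coeff i * (reflect _ (ofFn _ a)).coeff j), Nat.add_sub_cancel,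
    ← Fin.sum_univ_eq_sum_range]
  refine Finset.sum_congr rfl fun i _ => ?_
  rw [coeff_reflect, revAt_le (by omega), Nat.sub_sub_self (by omega),
    ofFn_coeff_eq_val_of_lt _ i.isLt, ofFn_coeff_eq_val_of_lt _ i.isLt, mul_comm]

section Field

variable {K : Type*} [Field K]

theorem monic_C_inv_mul_reverse {f : K[X]} (h0 : f.coeff 0 ≠ 0) :
    (C (f.coeff 0)⁻¹ * f.reverse).Monic := by
  rw [Monic, leadingCoeff_mul, leadingCoeff_C, reverse_leadingCoeff, trailingCoeff,
    natTrailingDegree_eq_zero.2 (Or.inr h0), inv_mul_cancel₀ h0]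

theorem eq_C_inv_mul_reverse_of_reverse_dvd {f : K[X]} (hf : f.Monic) (h0 : f.coeff 0 ≠ 0)
    (h : f.reverse ∣ f) : f = C (f.coeff 0)⁻¹ * f.reverse := by
  refine eq_of_monic_of_dvd_of_natDegree_le (monic_C_inv_mul_reverse h0) hf
    (((isUnit_C.2 (inv_ne_zero h0).isUnit).mul_left_dvd).2 h) ?_
  rw [natDegree_C_mul (inv_ne_zero h0), natDegree_reverse_of_coeff_zero_ne_zero h0]

theorem reverse_eq_C_mul_of_eq_C_inv_mul_reverse {f : K[X]} (h0 : f.coeff 0 ≠ 0)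
    (h : f = C (f.coeff 0)⁻¹ * f.reverse) : f.reverse = C (f.coeff 0) * f := by
  calc f.reverse = C (f.coeff 0) * (C (f.coeff 0)⁻¹ * f.reverse) := by
        rw [← mul_assoc, ← C_mul, mul_inv_cancel₀ h0, C_1, one_mul]
    _ = C (f.coeff 0) * f := by rw [← h]

theorem isCoprime_iff_forall_dvd_mul_imp_eq_zero {a h : K[X]} (hh : h ≠ 0) :
    IsCoprime a h ↔ ∀ r : K[X], r.degree < h.degree → h ∣ a * r → r = 0 := by
  classical
  refine ⟨fun hc r hr hdvd => eq_zero_of_dvd_of_degree_lt (hc.symm.dvd_of_dvd_mul_left hdvd) hr,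
    fun H => ?_⟩
  rw [← gcd_isUnit_iff]
  set d := gcd a h
  by_contra hd
  obtain ⟨r, hr⟩ : d ∣ h := gcd_dvd_right a h
  obtain ⟨a', ha'⟩ : d ∣ a := gcd_dvd_left a h
  have hr0 : r ≠ 0 := by rintro rfl; exact hh (by rw [hr, mul_zero])
  have hd0 : d ≠ 0 := by rintro h0; exact hh (by rw [hr, h0, zero_mul])
  refine hr0 (H r ?_ ⟨a', ?_⟩)
  · rw [hr, degree_mul, degree_eq_natDegree hd0, degree_eq_natDegree hr0]
    have := natDegree_pos_iff_degree_pos.2 (degree_pos_of_ne_zero_of_nonunit hd0 hd)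
    exact_mod_cast (by omega : r.natDegree < d.natDegree + r.natDegree)
  · rw [ha', hr]
    ring

theorem isCoprime_reverse_pow {f e : K[X]} (hf0 : f.coeff 0 ≠ 0)
    (hf_self : f = C (f.coeff 0)⁻¹ * f.reverse) (hfe : IsCoprime f e) (N : ℕ) :
    IsCoprime (f ^ N).reverse (e ^ N) := by
  rw [reverse_pow, reverse_eq_C_mul_of_eq_C_inv_mul_reverse hf0 hf_self]
  exact ((isCoprime_mul_unit_left_left (isUnit_C.2 hf0.isUnit) f e).2 hfe).pow

theorem exists_eq_pow_of_isCoprime_reverse {D : K[X]} (hD : Squarefree D)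
    (hD0 : D.coeff 0 ≠ 0) (hDrev : Associated D.reverse D) {N : ℕ} (hN : N ≠ 0) {g h : K[X]}
    (hg : g.Monic) (hgh : g * h = D ^ N) (hcop : IsCoprime g.reverse h) :
    ∃ f : K[X], f.Monic ∧ Squarefree f ∧ f ∣ D ∧
      f = C (f.coeff 0)⁻¹ * f.reverse ∧ g = f ^ N := by
  classical
  have hgD : g ∣ D ^ N := ⟨h, hgh.symm⟩
  have hg0 : g.coeff 0 ≠ 0 := coeff_zero_ne_zero_of_dvd hgD <| by
    rw [coeff_zero_eq_eval_zero, eval_pow, ← coeff_zero_eq_eval_zero]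
    exact pow_ne_zero N hD0
  have hrev_dvd : g.reverse ∣ g := by
    refine hcop.dvd_of_dvd_mul_right ?_
    rw [hgh]
    exact (reverse_dvd_reverse hgD).trans (by rw [reverse_pow]; exact hDrev.pow_pow.dvd)
  have hg_self := eq_C_inv_mul_reverse_of_reverse_dvd hg hg0 hrev_dvd
  have hcop' : IsCoprime g h := hcop.of_isCoprime_of_dvd_left
    ⟨C (g.coeff 0), by rw [reverse_eq_C_mul_of_eq_C_inv_mul_reverse hg0 hg_self, mul_comm]⟩
  obtain ⟨d, hd⟩ := exists_associated_pow_of_mul_eq_pow' hcop' hgh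
  have hd0 : d ≠ 0 := by
    rintro rfl
    exact hg.ne_zero (hd.eq_zero_iff.1 (zero_pow hN))
  set f := normalize d
  have hf : f.Monic := monic_normalize hd0
  have hgf : g = f ^ N :=
    eq_of_monic_of_associated hg (hf.pow N) ((normalize_associated d).pow_pow.trans hd).symm
  have hfD : f ∣ D := (UniqueFactorizationMonoid.pow_dvd_pow_iff_dvd hN).1 (hgf ▸ hgD)
  have hf0 : f.coeff 0 ≠ 0 := coeff_zero_ne_zero_of_dvd hfD hD0
  refine ⟨f, hf, hD.squarefree_of_dvd hfD, hfD,
    eq_C_inv_mul_reverse_of_reverse_dvd hf hf0 ?_, hgf⟩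
  rw [← UniqueFactorizationMonoid.pow_dvd_pow_iff_dvd hN, ← reverse_pow, ← hgf]
  exact hrev_dvd

theorem isCoprime_reverse_iff_exists_eq_pow {D : K[X]} (hD : Squarefree D)
    (hD0 : D.coeff 0 ≠ 0) (hDrev : Associated D.reverse D) {N : ℕ} (hN : N ≠ 0) {g h : K[X]}
    (hg : g.Monic) (hgh : g * h = D ^ N) :
    IsCoprime g.reverse h ↔ ∃ f : K[X], f.Monic ∧ Squarefree f ∧ f ∣ D ∧
      f = C (f.coeff 0)⁻¹ * f.reverse ∧ g = f ^ N := by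
  refine ⟨exists_eq_pow_of_isCoprime_reverse hD hD0 hDrev hN hg hgh, ?_⟩
  rintro ⟨f, hf, -, ⟨e, rfl⟩, hf_self, rfl⟩
  have he : h = e ^ N := by
    refine mul_left_cancel₀ (pow_ne_zero N hf.ne_zero) ?_
    rw [hgh, mul_pow]
  rw [he]
  exact isCoprime_reverse_pow (coeff_zero_ne_zero_of_dvd (dvd_mul_right f e) hD0) hf_self
    (squarefree_mul_iff.1 hD).1.isCoprime N

variable {n : ℕ} {g h : K[X]}

theorem monic_of_mul_eq_X_pow_sub_one (hn : n ≠ 0) (hg : g.Monic) (hgh : g * h = X ^ n - 1) :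
    h.Monic :=
  hg.of_mul_monic_left (by simpa [hgh] using monic_X_pow_sub_C (1 : K) hn)

theorem natDegree_add_natDegree_of_mul_eq_X_pow_sub_one (hn : n ≠ 0) (hg : g.Monic)
    (hgh : g * h = X ^ n - 1) : g.natDegree + h.natDegree = n := by
  rw [← hg.natDegree_mul (monic_of_mul_eq_X_pow_sub_one hn hg hgh), hgh]
  simpa using natDegree_X_pow_sub_C (n := n) (r := (1 : K))

theorem coeff_X_pow_sub_one_mul_eq_zero (hg : g.Monic) (hgh : g * h = X ^ n - 1) {q : K[X]}
    (hq : (h * q).natDegree < n) {k : ℕ} (hk : k ∈ Set.Ico g.natDegree n) :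
    ((X ^ n - 1) * q).coeff k = 0 := by
  obtain ⟨hgk, hkn⟩ := hk
  rw [sub_mul, one_mul, coeff_sub, coeff_X_pow_mul', if_neg (by omega), zero_sub, neg_eq_zero]
  rcases eq_or_ne q 0 with rfl | hq0
  · exact coeff_zero k
  have hdeg := natDegree_add_natDegree_of_mul_eq_X_pow_sub_one (by omega) hg hgh
  have hh := monic_of_mul_eq_X_pow_sub_one (by omega) hg hgh
  rw [hh.natDegree_mul' hq0] at hq
  exact coeff_eq_zero_of_natDegree_lt (by omega)

theorem forall_coeff_mul_eq_zero_iff_dvd (hg : g.Monic) (hgh : g * h = X ^ n - 1) {R : K[X]}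
    (hR : R.natDegree < n) :
    (∀ k ∈ Set.Ico g.natDegree n, (R * g).coeff k = 0) ↔ h ∣ R := by
  have hh := monic_of_mul_eq_X_pow_sub_one (by omega) hg hgh
  constructor
  · intro H
    rw [← modByMonic_eq_zero_iff_dvd hh]
    by_contra hS
    have hdeg := natDegree_add_natDegree_of_mul_eq_X_pow_sub_one (by omega) hg hgh
    have hSdeg : (R %ₘ h).natDegree < h.natDegree :=
      natDegree_lt_natDegree hS (degree_modByMonic_lt R hh)
    have hsplit : R * g = R %ₘ h * g + (X ^ n - 1) * (R /ₘ h) := by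
      rw [← hgh]
      conv_lhs => rw [← modByMonic_add_div R h]
      ring
    have hQ : (h * (R /ₘ h)).natDegree < n := by
      rw [← sub_eq_of_eq_add' (modByMonic_add_div R h).symm]
      exact (natDegree_sub_le _ _).trans_lt (max_lt hR (by omega))
    -- the leading coefficient of `(R %ₘ h) * g` sits in the window `[deg g, n)`
    have hk : (R %ₘ h).natDegree + g.natDegree ∈ Set.Ico g.natDegree n := ⟨by omega, by omega⟩
    have hlead := H _ hk
    rw [hsplit, coeff_add, coeff_X_pow_sub_one_mul_eq_zero hg hgh hQ hk, add_zero,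
      coeff_mul_degree_add_degree, hg.leadingCoeff, mul_one, leadingCoeff_eq_zero] at hlead
    exact hS hlead
  · rintro ⟨B, rfl⟩ k hk
    rw [show h * B * g = (X ^ n - 1) * B by rw [← hgh]; ring]
    exact coeff_X_pow_sub_one_mul_eq_zero hg hgh hR hk

end Field

end Polynomial

section CyclicCode

variable {K : Type*} [Field K] {n : ℕ} {g h : K[X]}

section DecidableEq

variable [DecidableEq K]

theorem mem_cyclicCode_iff {c : Fin n → K} : c ∈ cyclicCode n g ↔ g ∣ ofFn n c := by
  simp only [ofFn_eq_sum_monomial, ← C_mul_X_pow_eq_monomial]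
  rfl

theorem mem_dualCode_cyclicCode_iff (hn : 0 < n) (hg : g.Monic) (hgh : g * h = X ^ n - 1)
    (a : Fin n → K) : a ∈ dualCode (cyclicCode n g) ↔ h ∣ reflect (n - 1) (ofFn n a) := by
  have hR : (reflect (n - 1) (ofFn n a)).natDegree < n :=
    natDegree_reflect_le.trans_lt (max_lt (by omega) (ofFn_natDegree_lt hn a))
  rw [← forall_coeff_mul_eq_zero_iff_dvd hg hgh hR]
  constructor
  · rintro ha k ⟨hgk, hkn⟩
    have hdeg : (g * X ^ (n - 1 - k)).natDegree < n := by
      rw [hg.natDegree_mul' (monic_X_pow _).ne_zero, natDegree_X_pow]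
      omega
    have hb : toFn n (g * X ^ (n - 1 - k)) ∈ cyclicCode n g := by
      rw [mem_cyclicCode_iff, ofFn_comp_toFn_eq_id_of_natDegree_lt hdeg]
      exact dvd_mul_right _ _
    have := ha _ hb
    rwa [sum_mul_eq_coeff_reflect_ofFn_mul, ofFn_comp_toFn_eq_id_of_natDegree_lt hdeg,
      ← mul_assoc, coeff_mul_X_pow', if_pos (by omega), Nat.sub_sub_self (by omega)] at this
  · intro H b hb
    obtain ⟨s, hs⟩ := mem_cyclicCode_iff.1 hb
    have hgs : (g * s).natDegree < n := hs ▸ ofFn_natDegree_lt hn b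
    rw [sum_mul_eq_coeff_reflect_ofFn_mul, hs, ← mul_assoc, coeff_mul]
    refine Finset.sum_eq_zero fun ⟨i, j⟩ hij => ?_
    rw [HasAntidiagonal.mem_antidiagonal] at hij
    by_cases hi : g.natDegree ≤ i
    · rw [H i ⟨hi, by omega⟩, zero_mul]
    rcases eq_or_ne s 0 with rfl | hs0
    · rw [coeff_zero, mul_zero]
    rw [hg.natDegree_mul' hs0] at hgs
    rw [coeff_eq_zero_of_natDegree_lt (p := s) (by omega), mul_zero]

end DecidableEq

theorem isLCD_cyclicCode_iff_isCoprime (hn : 0 < n) (hg : g.Monic) (hgh : g * h = X ^ n - 1) :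
    IsLCD (cyclicCode n g) ↔ IsCoprime g.reverse h := by
  classical
  have hh := monic_of_mul_eq_X_pow_sub_one (by omega) hg hgh
  have hdeg := natDegree_add_natDegree_of_mul_eq_X_pow_sub_one (by omega) hg hgh
  set M := n - 1 - g.natDegree
  have hreflect : ∀ q : K[X], q.natDegree < h.natDegree →
      reflect (n - 1) (g * q) = g.reverse * reflect M q :=
    fun q hq => reflect_mul_eq_reverse_mul_reflect (by omega) (by omega)
  have hreflect_lt : ∀ q : K[X], q.natDegree < h.natDegree →
      (reflect M q).natDegree < h.natDegree :=
    fun q hq => natDegree_reflect_le.trans_lt (max_lt (by omega) hq)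
  rw [isCoprime_iff_forall_dvd_mul_imp_eq_zero hh.ne_zero, IsLCD, Submodule.eq_bot_iff]
  constructor
  · intro hlcd r hr hdvd
    by_contra hr0
    have hrh : r.natDegree < h.natDegree := natDegree_lt_natDegree hr0 hr
    have hgq : (g * reflect M r).natDegree < n := by
      rw [hg.natDegree_mul' (fun h0 => hr0 (reflect_eq_zero_iff.1 h0))]
      have := hreflect_lt r hrh
      omega
    have hc := hlcd (toFn n (g * reflect M r)) <| Submodule.mem_inf.2
      ⟨mem_cyclicCode_iff.2 (by
        rw [ofFn_comp_toFn_eq_id_of_natDegree_lt hgq]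
        exact dvd_mul_right _ _),
       (mem_dualCode_cyclicCode_iff hn hg hgh _).2 (by
        rwa [ofFn_comp_toFn_eq_id_of_natDegree_lt hgq, hreflect _ (hreflect_lt r hrh),
          reflect_reflect])⟩
    have : g * reflect M r = 0 := by
      rw [← ofFn_comp_toFn_eq_id_of_natDegree_lt hgq, hc, map_zero]
    exact hr0 (reflect_eq_zero_iff.1 ((mul_eq_zero.1 this).resolve_left hg.ne_zero))
  · intro H c hc
    obtain ⟨hcC, hcD⟩ := Submodule.mem_inf.1 hc
    obtain ⟨q, hq⟩ := mem_cyclicCode_iff.1 hcC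
    refine injective_ofFn n ?_
    rcases eq_or_ne q 0 with rfl | hq0
    · rw [hq, mul_zero, map_zero]
    have hqh : q.natDegree < h.natDegree := by
      have := hq ▸ ofFn_natDegree_lt hn c
      rw [hg.natDegree_mul' hq0] at this
      omega
    rw [mem_dualCode_cyclicCode_iff hn hg hgh, hq, hreflect q hqh] at hcD
    exact absurd (reflect_eq_zero_iff.1 (H _ (degree_lt_degree (hreflect_lt q hqh)) hcD)) hq0

end CyclicCode

theorem stmt6_general {F : Type*} [Field F] {p : ℕ} (hp : p.Prime)
    [CharP F p] {n t l : ℕ} (hn : n = p ^ t * l) (hco : Nat.Coprime l p)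
    (g : F[X]) (hg : g.Monic) (hgdvd : g ∣ (Polynomial.X ^ n - 1 : F[X])) :
    IsLCD (cyclicCode n g) ↔
      ∃ f : F[X], f.Monic ∧ Squarefree f ∧ f ∣ (Polynomial.X ^ l - 1 : F[X]) ∧
        f = Polynomial.C (f.coeff 0)⁻¹ * f.reverse ∧ g = f ^ (p ^ t) := by
  have := Fact.mk hp
  have hpl : ¬p ∣ l := hp.coprime_iff_not_dvd.1 hco.symm
  have hl : l ≠ 0 := by rintro rfl; exact hpl (dvd_zero p)
  have hsq : Squarefree (X ^ l - 1 : F[X]) := by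
    simpa using (separable_X_pow_sub_C' p l (1 : F) hpl one_ne_zero).squarefree
  have hfrob : ((X : F[X]) ^ l - 1) ^ p ^ t = X ^ n - 1 := by
    rw [sub_pow_char_pow, one_pow, ← pow_mul, hn, mul_comm]
  obtain ⟨h, hgh⟩ := hgdvd
  rw [isLCD_cyclicCode_iff_isCoprime (hn ▸ Nat.mul_pos (pow_pos hp.pos t) (Nat.pos_of_ne_zero hl))
    hg hgh.symm]
  refine isCoprime_reverse_iff_exists_eq_pow hsq ?_ ?_ (pow_ne_zero t hp.ne_zero) hg
    (hfrob ▸ hgh.symm)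
  · simp [coeff_X_pow, Ne.symm hl]
  · rw [reverse_X_pow_sub_one]
    exact (Associated.refl _).neg_left

theorem stmt6 {F : Type*} [Field F] [Fintype F] {p : ℕ} (hp : p.Prime)
    [CharP F p] {n t l : ℕ} (hn : n = p ^ t * l) (hco : Nat.Coprime l p)
    (g : F[X]) (hg : g.Monic) (hgdvd : g ∣ (Polynomial.X ^ n - 1 : F[X])) :
    IsLCD (cyclicCode n g) ↔
      ∃ f : F[X], f.Monic ∧ Squarefree f ∧ f ∣ (Polynomial.X ^ l - 1 : F[X]) ∧
        f = Polynomial.C (f.coeff 0)⁻¹ * f.reverse ∧ g = f ^ (p ^ t) :=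
  stmt6_general hp hn hco g hg hgdvd
end

section
/- Let C_1,…,C_s be linear codes of length n over the finite field F_q and let A be an s×s quasi-orthogonal matrix over F_q (i.e., A·A^T is a diagonal matrix all of whose diagonal entries are nonzero). Then the matrix-product code C = [C_1,…,C_s]A is an LCD code if and only if C_1,…,C_s are all LCD codes. -/
open Polynomial Matrix Finset

variable {F : Type*} [Field F]

/-! The code `[C₁,…,C_s]A` is the image of `∏ Cᵢ` under the linear map `φ c = (∑ᵢ aᵢⱼ cᵢ)ⱼ`.
If `A Aᵀ = diag(D)` with all `Dᵢ ≠ 0`, then `φ` is injective and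
`⟨φ c, φ d⟩ = ∑ᵢ Dᵢ ⟨cᵢ, dᵢ⟩`; testing against `d` supported on a single block shows that
`φ c` is orthogonal to the code iff every `cᵢ ∈ Cᵢ^⊥`. Hence `C ∩ C^⊥ = φ (∏ (Cᵢ ∩ Cᵢ^⊥))`,
which is zero iff every factor is. -/

theorem Submodule.pi_univ_eq_bot_iff {R ι : Type*} {φ : ι → Type*} [Semiring R]
    [∀ i, AddCommMonoid (φ i)] [∀ i, Module R (φ i)] (p : (i : ι) → Submodule R (φ i)) :
    Submodule.pi Set.univ p = ⊥ ↔ ∀ i, p i = ⊥ := by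
  classical
  refine ⟨fun h i => (Submodule.eq_bot_iff _).2 fun x hx => ?_, fun h => ?_⟩
  · have hsingle : Pi.single i x ∈ Submodule.pi Set.univ p := Submodule.le_comap_single_pi p hx
    simpa using congrFun (h ▸ hsingle : Pi.single i x ∈ (⊥ : Submodule R _)) i
  · rw [show p = fun _ => ⊥ from funext h]
    exact Submodule.pi_univ_bot

section MatrixProduct

variable {s m n : ℕ}

-- Column `t` of the blocks of `[c₁,…,c_s]A` is `Aᵀ *ᵥ (c · t)`.
def matrixProductMap (A : Matrix (Fin s) (Fin m) F) :
    (Fin s → Fin n → F) →ₗ[F] (Fin m × Fin n → F) where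
  toFun c p := (Aᵀ *ᵥ fun i => c i p.2) p.1
  map_add' _ _ := funext fun p => congrFun (Matrix.mulVec_add Aᵀ _ _) p.1
  map_smul' r _ := funext fun p => congrFun (Matrix.mulVec_smul Aᵀ r _) p.1

theorem matrixProductCode_eq_map (A : Matrix (Fin s) (Fin m) F)
    (C : Fin s → Submodule F (Fin n → F)) :
    matrixProductCode A C = (Submodule.pi Set.univ C).map (matrixProductMap A) := by
  ext x
  constructor
  · rintro ⟨c, hc, rfl⟩
    exact ⟨c, fun i _ => hc i, rfl⟩
  · rintro ⟨c, hc, rfl⟩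
    exact ⟨c, fun i => hc i trivial, rfl⟩

variable {A : Matrix (Fin s) (Fin m) F} {D : Fin s → F}

theorem dotProduct_matrixProductMap (hA : A * Aᵀ = Matrix.diagonal D)
    (c d : Fin s → Fin n → F) :
    matrixProductMap A c ⬝ᵥ matrixProductMap A d = ∑ i, D i * (c i ⬝ᵥ d i) :=
  calc matrixProductMap A c ⬝ᵥ matrixProductMap A d
      = ∑ t, (Aᵀ *ᵥ fun i => c i t) ⬝ᵥ (Aᵀ *ᵥ fun i => d i t) := by
        rw [dotProduct, Fintype.sum_prod_type, Finset.sum_comm]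
        rfl
    _ = ∑ t, (fun i => c i t) ⬝ᵥ (Matrix.diagonal D *ᵥ fun i => d i t) := by
        refine Finset.sum_congr rfl fun t _ => ?_
        rw [Matrix.mulVec_transpose A (fun i => c i t), ← Matrix.dotProduct_mulVec,
          Matrix.mulVec_mulVec, hA]
    _ = ∑ i, D i * (c i ⬝ᵥ d i) := by
        simp only [Matrix.mulVec_diagonal, dotProduct, Finset.mul_sum]
        rw [Finset.sum_comm]
        exact Finset.sum_congr rfl fun i _ => Finset.sum_congr rfl fun t _ => by ring

theorem matrixProductMap_injective (hA : A * Aᵀ = Matrix.diagonal D) (hD : ∀ i, D i ≠ 0) :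
    Function.Injective (matrixProductMap (n := n) A) := by
  refine (injective_iff_map_eq_zero _).2 fun c hc => ?_
  funext i t
  have hcol : (Aᵀ *ᵥ fun i => c i t) = 0 := funext fun j => congrFun hc (j, t)
  have hdiag : (Matrix.diagonal D *ᵥ fun i => c i t) = 0 := by
    rw [← hA, ← Matrix.mulVec_mulVec, hcol, Matrix.mulVec_zero]
  simpa [Matrix.mulVec_diagonal, hD i] using congrFun hdiag i

theorem matrixProductMap_mem_dualCode_iff (hA : A * Aᵀ = Matrix.diagonal D) (hD : ∀ i, D i ≠ 0)
    (C : Fin s → Submodule F (Fin n → F)) (c : Fin s → Fin n → F) :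
    matrixProductMap A c ∈ dualCode (matrixProductCode A C) ↔ ∀ i, c i ∈ dualCode (C i) := by
  classical
  rw [matrixProductCode_eq_map]
  constructor
  · intro h i b hb
    have hsingle : Pi.single i b ∈ Submodule.pi Set.univ C := Submodule.le_comap_single_pi C hb
    have hpair : matrixProductMap A c ⬝ᵥ matrixProductMap A (Pi.single i b) = 0 :=
      h _ ⟨_, hsingle, rfl⟩
    rw [dotProduct_matrixProductMap hA, Finset.sum_eq_single i (fun k _ hk => by simp [hk])
      (by simp)] at hpair
    change c i ⬝ᵥ b = 0
    simpa [hD i] using hpair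
  · rintro h _ ⟨d, hd, rfl⟩
    change matrixProductMap A c ⬝ᵥ matrixProductMap A d = 0
    rw [dotProduct_matrixProductMap hA]
    exact Finset.sum_eq_zero fun i _ => by
      rw [show c i ⬝ᵥ d i = 0 from h i _ (hd i trivial), mul_zero]

theorem matrixProductCode_inf_dualCode (hA : A * Aᵀ = Matrix.diagonal D) (hD : ∀ i, D i ≠ 0)
    (C : Fin s → Submodule F (Fin n → F)) :
    matrixProductCode A C ⊓ dualCode (matrixProductCode A C)
      = (Submodule.pi Set.univ fun i => C i ⊓ dualCode (C i)).map (matrixProductMap A) := by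
  ext x
  constructor
  · rintro ⟨⟨c, hc, rfl⟩, hdual⟩
    exact ⟨c, fun i _ => ⟨hc i, (matrixProductMap_mem_dualCode_iff hA hD C c).1 hdual i⟩, rfl⟩
  · rintro ⟨c, hc, rfl⟩
    exact ⟨⟨c, fun i => (hc i trivial).1, rfl⟩,
      (matrixProductMap_mem_dualCode_iff hA hD C c).2 fun i => (hc i trivial).2⟩

theorem isLCD_matrixProductCode_iff (hA : A * Aᵀ = Matrix.diagonal D) (hD : ∀ i, D i ≠ 0)
    (C : Fin s → Submodule F (Fin n → F)) :
    IsLCD (matrixProductCode A C) ↔ ∀ i, IsLCD (C i) := by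
  rw [IsLCD, matrixProductCode_inf_dualCode hA hD,
    (Submodule.map_injective_of_injective (matrixProductMap_injective hA hD)).eq_iff'
      (Submodule.map_bot _), Submodule.pi_univ_eq_bot_iff]
  rfl

end MatrixProduct

theorem stmt9_general {F : Type*} [Field F]
    {s n : ℕ} (A : Matrix (Fin s) (Fin s) F)
    (hQO₁ : ∀ i j, i ≠ j → (A * Aᵀ) i j = 0)
    (hQO₂ : ∀ i, (A * Aᵀ) i i ≠ 0)
    (C : Fin s → Submodule F (Fin n → F)) :
    IsLCD (matrixProductCode A C) ↔ ∀ i, IsLCD (C i) := by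
  exact isLCD_matrixProductCode_iff (Matrix.IsDiag.diagonal_diag hQO₁).symm hQO₂ C

theorem stmt9 {F : Type*} [Field F] [Fintype F]
    {s n : ℕ} (A : Matrix (Fin s) (Fin s) F)
    (hQO₁ : ∀ i j, i ≠ j → (A * Aᵀ) i j = 0)
    (hQO₂ : ∀ i, (A * Aᵀ) i i ≠ 0)
    (C : Fin s → Submodule F (Fin n → F)) :
    IsLCD (matrixProductCode A C) ↔ ∀ i, IsLCD (C i) :=
  stmt9_general A hQO₁ hQO₂ C
end

section
/- Let l be a prime power, let A be a non-singular lower-triangular s×s matrix over F_{l^2}, and let C_1 ⊇ C_2 ⊇ ⋯ ⊇ C_s be a decreasing chain of linear codes of length n over F_{l^2}. Then the matrix-product code C = [C_1,…,C_s]A is a Hermitian LCD code if and only if C_1,…,C_s are all Hermitian LCD codes. -/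
open Polynomial Matrix Finset

variable {F : Type*} [Field F]

/-! Because the codes are nested and both `A` and `A⁻¹` are lower triangular, block `j` of a
codeword of `[C_1, …, C_s]A` only involves codes `C_i ⊆ C_j`, and `A⁻¹` recovers the `c_i`
from the blocks: the matrix-product code is the direct product `C_1 × ⋯ × C_s`. The Hermitian
form on the product is the sum of the blockwise forms, so the Hermitian dual of the product is
the product of the duals, and a product meets its dual trivially iff every factor does. -/

section BlockCode

variable {κ ι : Type*}

/-- The direct product of the codes `D j`, with coordinates `(j, t)` as in `matrixProductCode`. -/
def blockCode (D : κ → Submodule F (ι → F)) : Submodule F (κ × ι → F) :=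
  ⨅ j, (D j).comap (LinearMap.funLeft F F (Prod.mk j))

theorem mem_blockCode {D : κ → Submodule F (ι → F)} {x : κ × ι → F} :
    x ∈ blockCode D ↔ ∀ j, (fun t => x (j, t)) ∈ D j := by
  simp only [blockCode, Submodule.mem_iInf, Submodule.mem_comap]
  rfl

theorem blockCode_inf (D E : κ → Submodule F (ι → F)) :
    blockCode D ⊓ blockCode E = blockCode fun j => D j ⊓ E j := by
  ext x
  simp only [Submodule.mem_inf, mem_blockCode]
  exact forall_and.symm

variable [DecidableEq κ]

theorem single_mem_blockCode {D : κ → Submodule F (ι → F)} {j : κ} {b : ι → F}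
    (hb : b ∈ D j) :
    (fun p : κ × ι => Pi.single (M := fun _ => ι → F) j b p.1 p.2) ∈ blockCode D := by
  refine mem_blockCode.2 fun k => show Pi.single (M := fun _ => ι → F) j b k ∈ D k from ?_
  rcases eq_or_ne k j with rfl | hkj
  · rwa [Pi.single_eq_same]
  · rw [Pi.single_eq_of_ne hkj]
    exact (D k).zero_mem

theorem blockCode_eq_bot_iff {D : κ → Submodule F (ι → F)} :
    blockCode D = ⊥ ↔ ∀ j, D j = ⊥ := by
  simp only [Submodule.eq_bot_iff]
  constructor
  · intro h j b hb
    funext t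
    simpa using congrFun (h _ (single_mem_blockCode hb)) (j, t)
  · intro h x hx
    funext p
    exact congrFun (h p.1 _ (mem_blockCode.1 hx p.1)) p.2

variable [Fintype κ] [Fintype ι]

theorem hermitianDual_blockCode {l : ℕ} (hl : l ≠ 0) (D : κ → Submodule F (ι → F)) :
    hermitianDual l (blockCode D) = blockCode fun j => hermitianDual l (D j) := by
  ext a
  simp only [mem_blockCode]
  constructor
  · intro ha j b hb
    -- pair `a` with `b` placed in block `j`; the other blocks contribute `a p * 0 ^ l = 0`
    have h := ha _ (single_mem_blockCode hb)
    rw [Fintype.sum_prod_type, Finset.sum_eq_single j (fun k _ hkj => by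
      simp [hkj, zero_pow hl]) (by simp)] at h
    simpa using h
  · intro ha b hb
    rw [Fintype.sum_prod_type]
    exact Finset.sum_eq_zero fun j _ => ha j _ (mem_blockCode.1 hb j)

theorem isHermitianLCD_blockCode_iff {l : ℕ} (hl : l ≠ 0) {D : κ → Submodule F (ι → F)} :
    IsHermitianLCD l (blockCode D) ↔ ∀ j, IsHermitianLCD l (D j) := by
  rw [IsHermitianLCD, hermitianDual_blockCode hl, blockCode_inf, blockCode_eq_bot_iff]
  rfl

end BlockCode

theorem sum_smul_mem_of_blockTriangular_toDual {κ M : Type*} [Fintype κ] [LinearOrder κ]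
    [AddCommGroup M] [Module F M] {B : Matrix κ κ F} (hB : B.BlockTriangular OrderDual.toDual)
    {D : κ → Submodule F M} (hD : Antitone D) {v : κ → M} (hv : ∀ i, v i ∈ D i) (j : κ) :
    ∑ i, B i j • v i ∈ D j := by
  refine Submodule.sum_mem _ fun i _ => ?_
  rcases lt_or_ge i j with hij | hji
  · simp [hB hij]
  · exact Submodule.smul_mem _ _ (hD hji (hv i))

theorem matrixProductCode_eq_blockCode {s n : ℕ} {A : Matrix (Fin s) (Fin s) F}
    (hA : IsUnit A.det) (hLT : A.BlockTriangular OrderDual.toDual)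
    {C : Fin s → Submodule F (Fin n → F)} (hC : Antitone C) :
    matrixProductCode A C = blockCode C := by
  ext x
  rw [mem_blockCode]
  constructor
  · rintro ⟨c, hc, rfl⟩ j
    have hblock : (fun t => ∑ i, A i j * c i t) = ∑ i, A i j • c i := by
      funext t
      simp [Finset.sum_apply]
    rw [hblock]
    exact sum_smul_mem_of_blockTriangular_toDual hLT hC hc j
  · intro hx
    have hLT' : A⁻¹.BlockTriangular OrderDual.toDual :=
      have := A.invertibleOfIsUnitDet hA
      Matrix.blockTriangular_inv_of_blockTriangular hLT
    refine ⟨fun i => ∑ j, A⁻¹ j i • fun t => x (j, t),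
      sum_smul_mem_of_blockTriangular_toDual hLT' hC hx, ?_⟩
    funext ⟨k, t⟩
    have hinv :
        ∑ i, ∑ j, A i k * (A⁻¹ j i * x (j, t)) = ∑ j, (A⁻¹ * A) j k * x (j, t) := by
      simp only [Matrix.mul_apply, Finset.sum_mul]
      rw [Finset.sum_comm]
      exact Finset.sum_congr rfl fun j _ => Finset.sum_congr rfl fun i _ => by ring
    simp only [Finset.sum_apply, Pi.smul_apply, smul_eq_mul, Finset.mul_sum, hinv,
      Matrix.nonsing_inv_mul A hA, Matrix.one_apply, ite_mul, one_mul, zero_mul,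
      Finset.sum_ite_eq', Finset.mem_univ, if_true]

theorem stmt12_general {F : Type*} [Field F] {l : ℕ} (hl : IsPrimePow l)
    {s n : ℕ} (A : Matrix (Fin s) (Fin s) F) (hA : IsUnit A.det)
    (hLT : ∀ i j : Fin s, (i : ℕ) < (j : ℕ) → A i j = 0)
    (C : Fin s → Submodule F (Fin n → F))
    (hchain : ∀ i j : Fin s, i ≤ j → C j ≤ C i) :
    IsHermitianLCD l (matrixProductCode A C) ↔ ∀ i, IsHermitianLCD l (C i) := by
  rw [matrixProductCode_eq_blockCode hA (fun i j => hLT i j) fun i j => hchain i j]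
  exact isHermitianLCD_blockCode_iff hl.pos.ne'

theorem stmt12 {F : Type*} [Field F] [Fintype F] {l : ℕ} (hl : IsPrimePow l)
    (hcard : Fintype.card F = l ^ 2)
    {s n : ℕ} (A : Matrix (Fin s) (Fin s) F) (hA : IsUnit A.det)
    (hLT : ∀ i j : Fin s, (i : ℕ) < (j : ℕ) → A i j = 0)
    (C : Fin s → Submodule F (Fin n → F))
    (hchain : ∀ i j : Fin s, i ≤ j → C j ≤ C i) :
    IsHermitianLCD l (matrixProductCode A C) ↔ ∀ i, IsHermitianLCD l (C i) :=
  stmt12_general hl A hA hLT C hchain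
end
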